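/- Let ε ∈ (0, 1), η ∈ (0, 1/2) and p ∈ ℕ. Let A be a random m × n real matrix and B be a random n × N real matrix, defined on a common probability space and independent of each other, such that A is a (p, ε/3, η/4)-Johnson–Lindenstrauss embedding and B is a (p, ε/3, η/4)-Johnson–Lindenstrauss embedding. Then the random m × N matrix AB is a (p, ε, η)-Johnson–Lindenstrauss embedding. -/

import Mathlib

/-!
If `B` distorts the squared norms of the points of `E` by a factor in `[1 - ε/3, 1 + ε/3]` and `A`
does the same on the points of `B(E)`, then `AB` distorts them by a factor in
`[(1 - ε/3)², (1 + ε/3)²] ⊆ [1 - ε, 1 + ε]`. The first event has probability at least `1 - η/4` by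
hypothesis. So does the second: by independence the law of `(A, B)` is a product, and for each
fixed `b` the set `b(E)` has at most `p` points, so it can be padded to a `p`-point set (`ℝⁿ` is
infinite unless `n = 0`, where the event is certain). A union bound leaves `1 - η/2 ≥ 1 - η`.
-/

open MeasureTheory ProbabilityTheory

noncomputable section

/-- A measurable-space structure on matrices, inherited from the product σ-algebra. -/
instance matrixMeasurableSpace {m n α : Type*} [MeasurableSpace α] :
    MeasurableSpace (Matrix m n α) :=
  (inferInstance : MeasurableSpace (m → n → α))

/-- The squared Euclidean norm ‖x‖₂² of a vector `x ∈ ℝ^d`. -/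
def sqNorm {d : ℕ} (x : Fin d → ℝ) : ℝ := ∑ i, x i ^ 2

/-- A random matrix `A ∈ ℝ^{m×N}` is a `(p, ε, η)`-Johnson–Lindenstrauss embedding if for every
set `E ⊆ ℝ^N` of cardinality `p`, with probability at least `1 - η` one has
`(1 - ε)‖x‖₂² ≤ ‖Ax‖₂² ≤ (1 + ε)‖x‖₂²` simultaneously for all `x ∈ E`. -/
def IsJLE {Ω : Type*} [MeasurableSpace Ω] (μ : Measure Ω) {m N : ℕ}
    (A : Ω → Matrix (Fin m) (Fin N) ℝ) (p : ℕ) (ε η : ℝ) : Prop :=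
  ∀ E : Finset (Fin N → ℝ), E.card = p →
    1 - η ≤ (μ {ω | ∀ x ∈ E,
      (1 - ε) * sqNorm x ≤ sqNorm ((A ω).mulVec x) ∧
      sqNorm ((A ω).mulVec x) ≤ (1 + ε) * sqNorm x}).toReal

open Matrix

lemma sqNorm_nonneg {d : ℕ} (x : Fin d → ℝ) : 0 ≤ sqNorm x :=
  Finset.sum_nonneg fun i _ => sq_nonneg (x i)

section Measurability

variable {α : Type*} [MeasurableSpace α] {m n : ℕ}

theorem Measurable.sqNorm {f : α → Fin n → ℝ} (hf : Measurable f) :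
    Measurable fun ω => sqNorm (f ω) := by
  unfold _root_.sqNorm
  fun_prop

theorem Measurable.mulVec {f : α → Matrix (Fin m) (Fin n) ℝ} {g : α → Fin n → ℝ}
    (hf : Measurable f) (hg : Measurable g) : Measurable fun ω => f ω *ᵥ g ω := by
  refine measurable_pi_lambda _ fun i => ?_
  change Measurable fun ω => ∑ j, f ω i j * g ω j
  fun_prop

end Measurability

def nearIsometricOn {m N : ℕ} (ε : ℝ) (E : Finset (Fin N → ℝ)) :
    Set (Matrix (Fin m) (Fin N) ℝ) :=
  {a | ∀ x ∈ E, (1 - ε) * sqNorm x ≤ sqNorm (a *ᵥ x) ∧ sqNorm (a *ᵥ x) ≤ (1 + ε) * sqNorm x}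

section NearIsometricOn

variable {m n N : ℕ} {ε ε' : ℝ} {E F : Finset (Fin N → ℝ)}

lemma nearIsometricOn_anti (hEF : E ⊆ F) :
    nearIsometricOn (m := m) ε F ⊆ nearIsometricOn ε E :=
  fun _ ha x hx => ha x (hEF hx)

lemma nearIsometricOn_mono (hεε' : ε ≤ ε') :
    nearIsometricOn (m := m) ε E ⊆ nearIsometricOn ε' E := by
  intro a ha x hx
  have := sqNorm_nonneg x
  constructor <;> nlinarith [ha x hx]

lemma nearIsometricOn_of_isEmpty [IsEmpty (Fin N)] :
    nearIsometricOn (m := m) ε E = Set.univ := by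
  refine Set.eq_univ_of_forall fun a x _ => ?_
  simp [sqNorm, Subsingleton.elim x 0]

lemma mul_mem_nearIsometricOn {δ δ' : ℝ} (hδ : 0 ≤ δ) (hδ' : 0 ≤ δ')
    {a : Matrix (Fin m) (Fin n) ℝ} {b : Matrix (Fin n) (Fin N) ℝ}
    (ha : a ∈ nearIsometricOn δ (E.image (b *ᵥ ·))) (hb : b ∈ nearIsometricOn δ' E) :
    a * b ∈ nearIsometricOn (δ + δ' + δ * δ') E := by
  intro x hx
  obtain ⟨hb₁, hb₂⟩ := hb x hx
  obtain ⟨ha₁, ha₂⟩ := ha _ (Finset.mem_image_of_mem _ hx)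
  rw [← mulVec_mulVec]
  have hx₀ := sqNorm_nonneg x
  have habx₀ := sqNorm_nonneg (a *ᵥ b *ᵥ x)
  have hδδ' := mul_nonneg hδ hδ'
  constructor <;> nlinarith [mul_nonneg hδ hx₀, mul_nonneg hδ' hx₀, mul_nonneg hδδ' hx₀]

lemma measurableSet_nearIsometricOn_image {α : Type*} [MeasurableSpace α]
    {f : α → Matrix (Fin m) (Fin n) ℝ} {g : α → Matrix (Fin n) (Fin N) ℝ}
    (hf : Measurable f) (hg : Measurable g) :
    MeasurableSet {ω | f ω ∈ nearIsometricOn ε (E.image (g ω *ᵥ ·))} := by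
  have hset : {ω | f ω ∈ nearIsometricOn ε (E.image (g ω *ᵥ ·))} = ⋂ x ∈ E,
      {ω | (1 - ε) * sqNorm (g ω *ᵥ x) ≤ sqNorm (f ω *ᵥ g ω *ᵥ x)} ∩
      {ω | sqNorm (f ω *ᵥ g ω *ᵥ x) ≤ (1 + ε) * sqNorm (g ω *ᵥ x)} := by
    ext ω
    simp [nearIsometricOn]
  rw [hset]
  refine Finset.measurableSet_biInter E fun x _ => ?_
  have hgx := (hg.mulVec measurable_const (g := fun _ => x)).sqNorm
  have hfgx := (hf.mulVec (hg.mulVec measurable_const (g := fun _ => x))).sqNorm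
  exact (measurableSet_le (hgx.const_mul _) hfgx).inter (measurableSet_le hfgx (hgx.const_mul _))

end NearIsometricOn

lemma isJLE_iff {Ω : Type*} [MeasurableSpace Ω] {μ : Measure Ω} {m N : ℕ}
    {A : Ω → Matrix (Fin m) (Fin N) ℝ} {p : ℕ} {ε η : ℝ} :
    IsJLE μ A p ε η ↔
      ∀ E : Finset (Fin N → ℝ), E.card = p → 1 - η ≤ μ.real (A ⁻¹' nearIsometricOn ε E) :=
  Iff.rfl

lemma IsJLE.le_measureReal_of_card_le {Ω : Type*} [MeasurableSpace Ω] {μ : Measure Ω}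
    [IsProbabilityMeasure μ] {m n : ℕ} {A : Ω → Matrix (Fin m) (Fin n) ℝ} {p : ℕ} {ε η : ℝ}
    (hA : IsJLE μ A p ε η) (hη : 0 ≤ η) {F : Finset (Fin n → ℝ)} (hF : F.card ≤ p) :
    1 - η ≤ μ.real (A ⁻¹' nearIsometricOn ε F) := by
  cases isEmpty_or_nonempty (Fin n)
  · simp [nearIsometricOn_of_isEmpty, hη]
  · obtain ⟨P, hFP, hP⟩ := Infinite.exists_superset_card_eq F p hF
    exact (hA P hP).trans (measureReal_mono (Set.preimage_mono (nearIsometricOn_anti hFP)))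

theorem ProbabilityTheory.IndepFun.le_measureReal_of_le_sections {Ω α β : Type*}
    [MeasurableSpace Ω] [MeasurableSpace α] [MeasurableSpace β] {μ : Measure Ω}
    [IsProbabilityMeasure μ] {X : Ω → α} {Y : Ω → β} (hX : Measurable X) (hY : Measurable Y)
    (hXY : IndepFun X Y μ) {S : β → Set α} (hS : MeasurableSet {q : α × β | q.1 ∈ S q.2})
    {c : ℝ} (hc : ∀ y, c ≤ μ.real (X ⁻¹' S y)) :
    c ≤ μ.real {ω | X ω ∈ S (Y ω)} := by
  have : IsProbabilityMeasure (μ.map Y) := Measure.isProbabilityMeasure_map hY.aemeasurable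
  rw [measureReal_def, ← ENNReal.ofReal_le_iff_le_toReal (measure_ne_top _ _),
    ← Set.preimage_ofPred_eq (p := fun q : α × β => q.1 ∈ S q.2) (f := fun ω => (X ω, Y ω)),
    ← Measure.map_apply (hX.prodMk hY) hS,
    (indepFun_iff_map_prod_eq_prod_map_map hX.aemeasurable hY.aemeasurable).1 hXY,
    Measure.prod_apply_symm hS]
  calc ENNReal.ofReal c = ∫⁻ _, ENNReal.ofReal c ∂(μ.map Y) := by simp
    _ ≤ _ := lintegral_mono fun y => ?_
  rw [Measure.map_apply hX (measurable_prodMk_right hS),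
    ENNReal.ofReal_le_iff_le_toReal (measure_ne_top _ _)]
  exact hc y

lemma measureReal_add_measureReal_sub_one_le_inter {Ω : Type*} [MeasurableSpace Ω]
    {μ : Measure Ω} [IsProbabilityMeasure μ] (s : Set Ω) {t : Set Ω} (ht : MeasurableSet t) :
    μ.real s + μ.real t - 1 ≤ μ.real (s ∩ t) := by
  have := measureReal_union_add_inter (s := s) ht (μ := μ)
  have := measureReal_le_one (μ := μ) (s := s ∪ t)
  linarith

/-- The composition of two independent Johnson-Lindenstrauss embeddings
`A` and `B` is again a Johnson-Lindenstrauss embedding. -/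
theorem composition_of_JLE {Ω : Type*} [MeasurableSpace Ω] (μ : Measure Ω)
    [IsProbabilityMeasure μ] {m n N p : ℕ} {ε η : ℝ}
    (hε : ε ∈ Set.Ioo (0 : ℝ) 1) (hη : η ∈ Set.Ioo (0 : ℝ) (1/2))
    (A : Ω → Matrix (Fin m) (Fin n) ℝ) (B : Ω → Matrix (Fin n) (Fin N) ℝ)
    (hAmeas : Measurable A) (hBmeas : Measurable B)
    (hindep : IndepFun A B μ)
    (hA : IsJLE μ A p (ε / 3) (η / 4)) (hB : IsJLE μ B p (ε / 3) (η / 4)) :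
    IsJLE μ (fun ω => A ω * B ω) p ε η := by
  obtain ⟨hε₀, hε₁⟩ := hε
  obtain ⟨hη₀, -⟩ := hη
  rw [isJLE_iff]
  intro E hE
  set goodB := B ⁻¹' nearIsometricOn (ε / 3) E
  set goodA := {ω | A ω ∈ nearIsometricOn (ε / 3) (E.image (B ω *ᵥ ·))}
  have hB' : 1 - η / 4 ≤ μ.real goodB := isJLE_iff.1 hB E hE
  have hA' : 1 - η / 4 ≤ μ.real goodA :=
    hindep.le_measureReal_of_le_sections (S := fun b => nearIsometricOn (ε / 3) (E.image (b *ᵥ ·)))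
      hAmeas hBmeas (measurableSet_nearIsometricOn_image measurable_fst measurable_snd) fun b =>
        hA.le_measureReal_of_card_le (by positivity) (Finset.card_image_le.trans hE.le)
  have hgood : goodB ∩ goodA ⊆ (fun ω => A ω * B ω) ⁻¹' nearIsometricOn ε E :=
    fun ω ⟨hb, ha⟩ => nearIsometricOn_mono (by nlinarith)
      (mul_mem_nearIsometricOn (by positivity) (by positivity) ha hb)
  have hinter := measureReal_add_measureReal_sub_one_le_inter goodB (t := goodA) (μ := μ)
    (measurableSet_nearIsometricOn_image hAmeas hBmeas)
  linarith [measureReal_mono hgood (μ := μ)]
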